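/- For a decorated tree T with n edges, the word P(T) obtained by the charge construction is a Dyck path of size n. -/

import Mathlib

/-- A Dyck word: `true` is an up step `u`, `false` is a down step `d`. -/
def IsDyck (w : List Bool) : Prop :=
  w.count true = w.count false ∧ ∀ k, (w.take k).count false ≤ (w.take k).count true

/-- Position (0-based index) of the `i`-th (1-based) up step of `w`. -/
noncomputable def upPos (w : List Bool) (i : ℕ) : ℕ :=
  sInf {j | w.getD j false = true ∧ (w.take (j + 1)).count true = i}

/-- Position of the down step matching the up step at position `k`:
the first later down step such that the letters strictly in between form a Dyck word. -/
noncomputable def matchIdx (w : List Bool) (k : ℕ) : ℕ :=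
  sInf {m | k < m ∧ w.getD m true = false ∧ IsDyck ((w.drop (k + 1)).take (m - (k + 1)))}

/-- The distance function `D_w(i)`: number of letters between the `i`-th up step and its
matching down step, plus one. -/
noncomputable def distFn (w : List Bool) (i : ℕ) : ℕ :=
  matchIdx w (upPos w i) - upPos w i

/-- One rotation step of the Tamari order on Dyck words: a factor `d · B` (with `B` a
nonempty Dyck word) is replaced by `B · d`. -/
def TamariStep (P Q : List Bool) : Prop :=
  ∃ A B C : List Bool, IsDyck B ∧ B ≠ [] ∧
    P = A ++ false :: (B ++ C) ∧ Q = A ++ (B ++ false :: C)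

/-- The Tamari order on Dyck words: reflexive-transitive closure of rotation steps. -/
def TamariLe : List Bool → List Bool → Prop := Relation.ReflTransGen TamariStep
/-- The type of a Dyck word `w` of size `n`: the word of length `n - 1` over `{N, E}`
(encoded with `true = E`, `false = N`) whose `k`-th letter is `E` iff the letter following
the `k`-th up step of `w` is an up step. -/
noncomputable def typeWord (w : List Bool) : List Bool :=
  (List.range (w.count true - 1)).map (fun k => w.getD (upPos w (k + 1) + 1) false)

/-- A synchronized interval: a pair of Dyck words of the same size, comparable in the
Tamari order, and with the same type. -/
def Sync (P Q : List Bool) : Prop :=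
  IsDyck P ∧ IsDyck Q ∧ P.length = Q.length ∧ TamariLe P Q ∧ typeWord P = typeWord Q
/-- A rooted plane tree whose leaves carry integer labels. -/
inductive PTree : Type where
  | leaf : ℤ → PTree
  | node : List PTree → PTree

/-- The labels of the leaves of a tree, in (counterclockwise) traversal order. -/
def leavesOf : PTree → List ℤ
  | .leaf a => [a]
  | .node [] => []
  | .node (c :: cs) => leavesOf c ++ leavesOf (.node cs)

/-- The number of edges of a tree (internal and external), the root being a node. -/
def numEdges : PTree → ℕ
  | .leaf _ => 0
  | .node [] => 0
  | .node (c :: cs) => 1 + numEdges c + numEdges (.node cs)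

/-- The number of non-root internal nodes of a tree. -/
def internalCount : PTree → ℕ
  | .leaf _ => 0
  | .node [] => 0
  | .node (c :: cs) =>
      (match c with | .node _ => 1 | .leaf _ => 0) + internalCount c + internalCount (.node cs)

/-- The three conditions of decorated trees, for a subtree rooted at depth `d`:
(1) a leaf whose parent has depth `p` has label `≥ -1` and `< p`;
(2) every internal node of depth `d > 0` has a descendant leaf with label `≤ d - 2`;
(3) if a leaf of a subtree rooted at a child of a node of depth `d` has label `d`, then
all leaves of that subtree preceding it in traversal order have labels `≥ d`. -/
def Cond : PTree → ℕ → Prop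
  | .leaf a, d => -1 ≤ a ∧ a + 1 < (d : ℤ)
  | .node cs, d =>
      (0 < d → ∃ a ∈ leavesOf (.node cs), a ≤ (d : ℤ) - 2) ∧
      (∀ c ∈ cs, ∀ i j : ℕ, i < j → j < (leavesOf c).length →
        (leavesOf c).getD j 0 = (d : ℤ) → (d : ℤ) ≤ (leavesOf c).getD i 0) ∧
      (∀ c ∈ cs, Cond c (d + 1))

/-- A decorated tree: a rooted plane tree (rooted at an internal node) with integer
labels on leaves satisfying the three conditions. -/
def IsDecorated (T : PTree) : Prop :=
  (∃ cs, T = PTree.node cs) ∧ Cond T 0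

mutual
/-- The list of charges of the leaves of a subtree rooted at depth `d`, in traversal
order: every leaf starts with charge `0`, and each internal node of depth `d > 0` adds
one charge to its first descendant leaf with label `≤ d - 2`. -/
def chargeList : PTree → ℕ → List ℕ
  | .leaf _, _ => [0]
  | .node cs, d =>
      let base := chargeConcat cs (d + 1)
      if d = 0 then base
      else
        let i := (leavesOf (.node cs)).findIdx (fun a => decide (a ≤ (d : ℤ) - 2))
        base.set i (base.getD i 0 + 1)

/-- Charges of a forest of subtrees, all rooted at depth `d`. -/
def chargeConcat : List PTree → ℕ → List ℕ
  | [], _ => []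
  | c :: cs, d => chargeList c d ++ chargeConcat cs d
end

/-- Builds the lower path `P(T)` by traversal, consuming the list of leaf charges:
each edge contributes an up step `u = true` when first visited, and a leaf of charge `k`
contributes `u·d^(1+k)`. Returns the word and the unconsumed charges. -/
def buildP : PTree → List ℕ → List Bool × List ℕ
  | .leaf _, ks => (List.replicate (ks.headD 0 + 1) false, ks.tail)
  | .node [], ks => ([], ks)
  | .node (c :: cs), ks =>
      let r1 := buildP c ks
      let r2 := buildP (.node cs) r1.2
      (true :: (r1.1 ++ r2.1), r2.2)

/-- The lower Dyck path `P(T)` of a decorated tree, via the charge construction. -/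
def Pword (T : PTree) : List Bool := (buildP T (chargeList T 0)).1

/-- The upper Dyck path `Q(T)`: the depth evolution of the traversal of `T`
(`true` = down an edge, `false` = up an edge). -/
def Qword : PTree → List Bool
  | .leaf _ => []
  | .node [] => []
  | .node (c :: cs) => (true :: (Qword c ++ [false])) ++ Qword (.node cs)

/-!
Each edge gives one up step and each leaf one down step plus one per charge it carries. By
condition (2) every non-root internal node places its charge, so there are
#leaves + #non-root internal nodes = #edges down steps. For the prefix condition, the charge a
node places on a leaf is paid for by the up step of the edge into that node, which precedes the
leaf in the traversal. Since the leaves of a subtree also carry charges placed by ancestors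
outside it, the induction is over charge lists `ks` dominating the subtree's own charges: the
path of the subtree never drops more than `ks.sum - (own charges).sum` below its start.
-/

open List

theorem List.sum_set_getD_add_one (l : List ℕ) (i : ℕ) :
    (l.set i (l.getD i 0 + 1)).sum = l.sum + if i < l.length then 1 else 0 := by
  induction l generalizing i with
  | nil => simp
  | cons x xs ih =>
    cases i with
    | zero =>
      simp only [set_cons_zero, getD_cons_zero, sum_cons, length_cons, Nat.zero_lt_succ, if_true]
      omega
    | succ i =>
      simp only [set_cons_succ, getD_cons_succ, sum_cons, length_cons, ih]
      split_ifs <;> omega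

theorem List.Forall₂.of_set_getD_add_one {l ks : List ℕ} {i : ℕ}
    (h : Forall₂ (· ≤ ·) (l.set i (l.getD i 0 + 1)) ks) : Forall₂ (· ≤ ·) l ks := by
  induction l generalizing i ks with
  | nil => simpa using h
  | cons x xs ih =>
    cases i with
    | zero =>
      rw [set_cons_zero, getD_cons_zero] at h
      cases h with
      | cons hk h => exact .cons (by omega) h
    | succ i =>
      rw [set_cons_succ, getD_cons_succ] at h
      cases h with
      | cons hk h => exact .cons hk (ih h)

theorem List.exists_append_of_length_eq_add {α : Type*} {l : List α} {m n : ℕ}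
    (h : l.length = m + n) : ∃ l₁ l₂, l = l₁ ++ l₂ ∧ l₁.length = m ∧ l₂.length = n :=
  ⟨l.take m, l.drop m, (take_append_drop m l).symm, by rw [length_take]; omega,
    by rw [length_drop]; omega⟩

theorem List.Forall₂.exists_append_of_append_left {α β : Type*} {R : α → β → Prop} {l₁ l₂ : List α}
    {ks : List β} (h : Forall₂ R (l₁ ++ l₂) ks) :
    ∃ k₁ k₂, ks = k₁ ++ k₂ ∧ Forall₂ R l₁ k₁ ∧ Forall₂ R l₂ k₂ := by
  refine ⟨ks.take l₁.length, ks.drop l₁.length, (take_append_drop _ _).symm, ?_, ?_⟩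
  · simpa using forall₂_take l₁.length h
  · simpa using forall₂_drop l₁.length h

def StaysNonneg (e : ℕ) (w : List Bool) : Prop :=
  ∀ k, (w.take k).count false ≤ (w.take k).count true + e

namespace StaysNonneg

theorem mono {e f : ℕ} {w : List Bool} (h : StaysNonneg e w) (hef : e ≤ f) : StaysNonneg f w :=
  fun k => (h k).trans (by omega)

theorem replicate_false (n : ℕ) : StaysNonneg n (replicate n false) := by
  intro k
  simp [count_replicate]

theorem true_cons_append {e f : ℕ} {u v : List Bool} (hu : StaysNonneg (e + 1) u)
    (hv : StaysNonneg f v) : StaysNonneg (e + f) (true :: (u ++ v)) := by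
  rintro (_ | k)
  · simp
  · have := hu k
    have := hv (k - u.length)
    simp only [take_succ_cons, take_append, count_cons, count_append, beq_false, Bool.not_true,
      Bool.false_eq_true, BEq.rfl, ↓reduceIte]
    omega

end StaysNonneg

theorem buildP_append (T : PTree) (k₁ k₂ : List ℕ) (hk : k₁.length = (leavesOf T).length) :
    buildP T (k₁ ++ k₂) = ((buildP T k₁).1, k₂) := by
  induction T using leavesOf.induct generalizing k₁ k₂ with
  | case1 =>
    rw [leavesOf] at hk
    obtain ⟨x, rfl⟩ := length_eq_one_iff.mp hk
    simp [buildP]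
  | case2 => simp_all [buildP, leavesOf]
  | case3 c cs ihc ihcs =>
    rw [leavesOf, length_append] at hk
    obtain ⟨k₁c, k₁cs, rfl, hc, hcs⟩ := exists_append_of_length_eq_add hk
    simp only [buildP, append_assoc, ihc _ _ hc, ihcs _ _ hcs]

theorem buildP_count_true (T : PTree) (ks : List ℕ) : (buildP T ks).1.count true = numEdges T := by
  induction T using leavesOf.induct generalizing ks with
  | case1 => simp [buildP, numEdges, count_replicate]
  | case2 => simp [buildP, numEdges]
  | case3 c cs ihc ihcs =>
    simp only [buildP, numEdges, count_cons_self, count_append, ihc, ihcs]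
    omega

theorem buildP_count_false (T : PTree) (ks : List ℕ) (hk : ks.length = (leavesOf T).length) :
    (buildP T ks).1.count false = (leavesOf T).length + ks.sum := by
  induction T using leavesOf.induct generalizing ks with
  | case1 =>
    rw [leavesOf] at hk
    obtain ⟨x, rfl⟩ := length_eq_one_iff.mp hk
    simp [buildP, leavesOf, add_comm]
  | case2 => simp_all [buildP, leavesOf]
  | case3 c cs ihc ihcs =>
    rw [leavesOf, length_append] at hk
    obtain ⟨kc, kcs, rfl, hc, hcs⟩ := exists_append_of_length_eq_add hk
    simp only [buildP, buildP_append c _ _ hc, count_cons, count_append, leavesOf, length_append,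
      sum_append, ihc _ hc, ihcs _ hcs, beq_false, Bool.not_true, Bool.false_eq_true, ↓reduceIte]
    omega

theorem numEdges_eq_length_leavesOf_add_internalCount :
    ∀ cs : List PTree,
      numEdges (.node cs) = (leavesOf (.node cs)).length + internalCount (.node cs)
  | [] => by simp [numEdges, leavesOf, internalCount]
  | .leaf _ :: cs => by
    rw [numEdges, leavesOf, internalCount, numEdges_eq_length_leavesOf_add_internalCount cs]
    simp only [numEdges, leavesOf, internalCount, cons_append, nil_append, length_cons]
    omega
  | .node cs' :: cs => by
    rw [numEdges, leavesOf, internalCount, numEdges_eq_length_leavesOf_add_internalCount cs,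
      numEdges_eq_length_leavesOf_add_internalCount cs', length_append]
    omega

theorem length_chargeConcat :
    ∀ (cs : List PTree) (d : ℕ), (chargeConcat cs d).length = (leavesOf (.node cs)).length
  | [], _ => by simp [chargeConcat, leavesOf]
  | .leaf _ :: cs, d => by
    simp [chargeConcat, chargeList, leavesOf, length_chargeConcat cs d]
  | .node cs' :: cs, d => by
    rw [chargeConcat, leavesOf, length_append, length_append, chargeList, length_chargeConcat cs d]
    split_ifs <;> simp [length_chargeConcat cs' (d + 1)]

theorem length_chargeList (T : PTree) (d : ℕ) : (chargeList T d).length = (leavesOf T).length := by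
  simpa [chargeConcat, leavesOf] using length_chargeConcat [T] d

theorem exists_chargeList_node_eq_set (cs : List PTree) (d : ℕ) :
    ∃ i, chargeList (.node cs) d =
      (chargeConcat cs (d + 1)).set i ((chargeConcat cs (d + 1)).getD i 0 + 1) := by
  rw [chargeList]
  split_ifs
  · exact ⟨_, (set_eq_of_length_le le_rfl).symm⟩
  · exact ⟨_, rfl⟩

theorem sum_chargeConcat :
    ∀ (cs : List PTree) {d : ℕ}, d ≠ 0 → (∀ c ∈ cs, Cond c d) →
      (chargeConcat cs d).sum = internalCount (.node cs)
  | [], _, _, _ => by simp [chargeConcat, internalCount]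
  | .leaf _ :: cs, d, hd, h => by
    rw [chargeConcat, internalCount, sum_append,
      sum_chargeConcat cs hd fun c hc => h c (mem_cons_of_mem _ hc)]
    simp [chargeList, internalCount]
  | .node cs' :: cs, d, hd, h => by
    have hc := h _ mem_cons_self
    rw [Cond] at hc
    obtain ⟨hlabel, -, hsub⟩ := hc
    obtain ⟨a, ha, hale⟩ := hlabel (Nat.pos_of_ne_zero hd)
    have hi : (leavesOf (.node cs')).findIdx (fun a => decide (a ≤ (d : ℤ) - 2)) <
        (chargeConcat cs' (d + 1)).length := by
      rw [length_chargeConcat]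
      exact findIdx_lt_length_of_exists ⟨a, ha, by simpa using hale⟩
    rw [chargeConcat, internalCount, sum_append, chargeList, if_neg hd, sum_set_getD_add_one,
      if_pos hi, sum_chargeConcat cs' (Nat.succ_ne_zero d) hsub,
      sum_chargeConcat cs hd fun c hc => h c (mem_cons_of_mem _ hc)]
    omega

theorem staysNonneg_buildP_leaf {a : ℤ} {d : ℕ} {ks : List ℕ}
    (h : Forall₂ (· ≤ ·) (chargeList (.leaf a) d) ks) :
    StaysNonneg (ks.sum - (chargeList (.leaf a) d).sum + 1) (buildP (.leaf a) ks).1 := by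
  rw [chargeList] at h ⊢
  obtain ⟨x, ks', -, hnil, rfl⟩ := forall₂_cons_left_iff.mp h
  obtain rfl := forall₂_nil_left_iff.mp hnil
  simpa [buildP] using StaysNonneg.replicate_false (x + 1)

theorem staysNonneg_buildP_node {cs : List PTree} {d : ℕ} {ks : List ℕ}
    (h : Forall₂ (· ≤ ·) (chargeList (.node cs) d) ks)
    (ih : ∀ ks, Forall₂ (· ≤ ·) (chargeConcat cs (d + 1)) ks →
      StaysNonneg (ks.sum - (chargeConcat cs (d + 1)).sum) (buildP (.node cs) ks).1) :
    StaysNonneg (ks.sum - (chargeList (.node cs) d).sum + 1) (buildP (.node cs) ks).1 := by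
  obtain ⟨i, hi⟩ := exists_chargeList_node_eq_set cs d
  rw [hi] at h ⊢
  have hbase := h.of_set_getD_add_one
  have := hbase.sum_le_sum
  have := sum_set_getD_add_one (chargeConcat cs (d + 1)) i
  refine (ih ks hbase).mono ?_
  split_ifs at * <;> omega

theorem staysNonneg_buildP_cons {c : PTree} {cs : List PTree} {d : ℕ} {k₁ k₂ : List ℕ}
    (h₁ : Forall₂ (· ≤ ·) (chargeList c d) k₁) (h₂ : Forall₂ (· ≤ ·) (chargeConcat cs d) k₂)
    (hc : StaysNonneg (k₁.sum - (chargeList c d).sum + 1) (buildP c k₁).1)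
    (hcs : StaysNonneg (k₂.sum - (chargeConcat cs d).sum) (buildP (.node cs) k₂).1) :
    StaysNonneg ((k₁ ++ k₂).sum - (chargeConcat (c :: cs) d).sum)
      (buildP (.node (c :: cs)) (k₁ ++ k₂)).1 := by
  rw [buildP, buildP_append c k₁ k₂ (h₁.length_eq.symm.trans (length_chargeList c d))]
  refine (hc.true_cons_append hcs).mono ?_
  have := h₁.sum_le_sum
  have := h₂.sum_le_sum
  rw [chargeConcat, sum_append, sum_append]
  omega

theorem staysNonneg_buildP :
    ∀ (cs : List PTree) (d : ℕ) (ks : List ℕ), Forall₂ (· ≤ ·) (chargeConcat cs d) ks →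
      StaysNonneg (ks.sum - (chargeConcat cs d).sum) (buildP (.node cs) ks).1
  | [], d, ks, h => by
    rw [chargeConcat, forall₂_nil_left_iff] at h
    subst h
    intro k
    simp [buildP]
  | .leaf _ :: cs, d, ks, h => by
    rw [chargeConcat] at h
    obtain ⟨k₁, k₂, rfl, h₁, h₂⟩ := h.exists_append_of_append_left
    exact staysNonneg_buildP_cons h₁ h₂ (staysNonneg_buildP_leaf h₁)
      (staysNonneg_buildP cs d k₂ h₂)
  | .node cs' :: cs, d, ks, h => by
    rw [chargeConcat] at h
    obtain ⟨k₁, k₂, rfl, h₁, h₂⟩ := h.exists_append_of_append_left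
    exact staysNonneg_buildP_cons h₁ h₂
      (staysNonneg_buildP_node h₁ (staysNonneg_buildP cs' (d + 1)))
      (staysNonneg_buildP cs d k₂ h₂)

/-- For a decorated tree `T` with `n` edges, `P(T)` is a Dyck path of size `n`. -/
theorem Pword_isDyck (T : PTree) (h : IsDecorated T) :
    IsDyck (Pword T) ∧ (Pword T).count true = numEdges T := by
  obtain ⟨⟨cs, rfl⟩, hcond⟩ := h
  rw [Cond] at hcond
  obtain ⟨-, -, hsub⟩ := hcond
  have hP : Pword (.node cs) = (buildP (.node cs) (chargeConcat cs 1)).1 := by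
    simp [Pword, chargeList]
  have hup : (Pword (.node cs)).count true = numEdges (.node cs) := by
    rw [hP, buildP_count_true]
  have hdown : (Pword (.node cs)).count false = numEdges (.node cs) := by
    rw [hP, buildP_count_false _ _ (length_chargeConcat cs 1),
      sum_chargeConcat cs one_ne_zero hsub, numEdges_eq_length_leavesOf_add_internalCount]
  refine ⟨⟨hup.trans hdown.symm, ?_⟩, hup⟩
  intro k
  simpa [hP] using staysNonneg_buildP cs 1 _ (forall₂_refl _) k
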